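/- Let G be a simply-connected topological group and Γ a discrete subgroup of G. Then the map Φ : G ×_Γ (∐_{g ∈ Γ} P_g(G)) → Λ(G/Γ) defined by Φ(m, f)(t) = [m · f(t)] is a homeomorphism, where Γ acts diagonally on G × ∐_g P_g(G) by α · (m, f) = (m α^{-1}, α f α^{-1}). -/

import Mathlib

open Set unitInterval

variable {G : Type*} [Group G] [TopologicalSpace G] [IsTopologicalGroup G]

/-- `∐_{g ∈ Γ} P_g(G)`: paths in `G` from `1` to `g`, summed over `g ∈ Γ`. -/
abbrev PathsTo (G : Type*) [Group G] [TopologicalSpace G] (Γ : Subgroup G) :=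
  Σ g : Γ, {f : C(unitInterval, G) // f 0 = 1 ∧ f 1 = (g : G)}

/-- The diagonal `Γ`-action relation on `G × ∐_g P_g(G)`:
`α · (m, f) = (m α⁻¹, α f α⁻¹)`, where `Γ` acts on paths by conjugation. -/
def ConjRel (Γ : Subgroup G) (a b : G × PathsTo G Γ) : Prop :=
  ∃ α : Γ, b.1 = a.1 * (α : G)⁻¹ ∧ b.2.1 = α * a.2.1 * α⁻¹ ∧
    ∀ t, b.2.2.1 t = (α : G) * a.2.2.1 t * (α : G)⁻¹

/-- The map `(m, f) ↦ (t ↦ [m ⬝ f t])` into the free loop space of `G ⧸ Γ`,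
modeled as continuous maps `[0,1] → G ⧸ Γ` with equal endpoints. -/
def PhiPre (Γ : Subgroup G) (a : G × PathsTo G Γ) :
    {f : C(unitInterval, G ⧸ Γ) // f 0 = f 1} :=
  ⟨⟨fun t => ↑(a.1 * a.2.2.1 t),
      (continuous_quotient_mk').comp (continuous_const.mul a.2.2.1.continuous)⟩, by
    simp only [ContinuousMap.coe_mk]
    rw [a.2.2.2.1, a.2.2.2.2, mul_one, QuotientGroup.mk_mul_of_mem _ a.2.1.2]⟩

theorem phiPre_resp (Γ : Subgroup G) (a b : G × PathsTo G Γ) (h : ConjRel Γ a b) :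
    PhiPre Γ a = PhiPre Γ b := by
  obtain ⟨m, g, f, hf0, hf1⟩ := a
  obtain ⟨m', g', f', hf0', hf1'⟩ := b
  obtain ⟨α, hm, hg, hf⟩ := h
  apply Subtype.ext
  apply ContinuousMap.ext
  intro t
  simp only [PhiPre, ContinuousMap.coe_mk] at *
  rw [hm, hf t]
  have hrw : m * (α : G)⁻¹ * ((α : G) * f t * (α : G)⁻¹) = m * f t * (α : G)⁻¹ := by
    group
  rw [hrw, QuotientGroup.mk_mul_of_mem _ (inv_mem α.2)]

/-! Writing `(m, f)` as the path `t ↦ m * f t` in `G`, which starts at `m` and ends in `m Γ`,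
`Φ` becomes "project a lift of the loop to `G ⧸ Γ`". As `G → G ⧸ Γ` is a covering map, every loop
lifts; two lifts of the same loop differ by a constant right translation by an element of `Γ`,
which is exactly the diagonal action; and by homotopy lifting, applied to the evaluation homotopy
`(t, ℓ) ↦ ℓ t`, lifts can be chosen continuously near any loop. These continuous local sections
make `Φ` open. -/

theorem Continuous.sigma_subtype_mk {ι Y Z : Type*} [TopologicalSpace ι] [DiscreteTopology ι]
    [TopologicalSpace Y] [TopologicalSpace Z] {P : ι → Z → Prop} {j : Y → ι} {F : Y → Z}
    (hj : Continuous j) (hF : Continuous F) (hP : ∀ y, P (j y) (F y)) :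
    Continuous fun y => (⟨j y, F y, hP y⟩ : Σ i, Subtype (P i)) := by
  refine continuous_iff_continuousAt.mpr fun y₀ => ?_
  have hfiber : IsOpen (j ⁻¹' {j y₀}) := (isOpen_discrete _).preimage hj
  refine ContinuousOn.continuousAt ?_ (hfiber.mem_nhds rfl)
  rw [continuousOn_iff_continuous_domRestrict]
  have hconst : (j ⁻¹' {j y₀}).domRestrict (fun y => (⟨j y, F y, hP y⟩ : Σ i, Subtype (P i))) =
      fun y => ⟨j y₀, F y, (congrArg (P · (F y)) (y.2 : j y = j y₀)).mp (hP y)⟩ :=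
    funext fun y => Sigma.subtype_ext y.2 rfl
  rw [hconst]
  exact continuous_sigmaMk.comp ((hF.comp continuous_subtype_val).subtype_mk _)

theorem IsCoveringMap.exists_continuous_local_lift {E X : Type*} [TopologicalSpace E]
    [TopologicalSpace X] {p : E → X} (cov : IsCoveringMap p) {γ₀ : C(I, X)} {e₀ : E}
    (he₀ : p e₀ = γ₀ 0) :
    ∃ U : Set C(I, X), IsOpen U ∧ γ₀ ∈ U ∧
      ∃ Λ : C(U, C(I, E)), ∀ (γ : U) (t : I), p (Λ γ t) = γ.1 t := by
  obtain ⟨φ, he₀φ, hp⟩ := cov.isLocalHomeomorph e₀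
  let start : C({γ : C(I, X) | γ 0 ∈ φ.target}, E) :=
    ⟨fun γ => φ.symm (γ.1 0), φ.continuousOn_symm.comp_continuous
      ((continuous_eval_const 0).comp continuous_subtype_val) fun γ => γ.2⟩
  let H : C(I × {γ : C(I, X) | γ 0 ∈ φ.target}, X) :=
    ⟨fun q => q.2.1 q.1, continuous_eval.comp
      ((continuous_subtype_val.comp continuous_snd).prodMk continuous_fst)⟩
  have H_0 : ∀ γ, H (0, γ) = p (start γ) := fun γ => by
    rw [hp]; exact (φ.right_inv γ.2).symm
  refine ⟨_, φ.open_target.preimage (continuous_eval_const 0), ?_,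
    ((cov.liftHomotopy H start H_0).comp ContinuousMap.prodSwap).curry, fun γ t =>
      congr_fun (cov.liftHomotopy_lifts H start H_0) (t, γ)⟩
  show γ₀ 0 ∈ φ.target
  rw [← he₀, hp]
  exact φ.map_source he₀φ

theorem isHomeomorph_quotLift_of_exists_local_section {X Y : Type*} [TopologicalSpace X]
    [TopologicalSpace Y] {r : X → X → Prop} {f : X → Y} (hf : ∀ a b, r a b → f a = f b)
    (hcont : Continuous f) (hfiber : ∀ a b, f a = f b → r a b)
    (hsection : ∀ y, ∃ U : Set Y, IsOpen U ∧ y ∈ U ∧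
      ∃ sec : U → X, Continuous sec ∧ ∀ u, f (sec u) = u) :
    IsHomeomorph (Quot.lift f hf) := by
  have hinj : Function.Injective (Quot.lift f hf) := by
    rintro ⟨a⟩ ⟨b⟩ hab
    exact Quot.sound (hfiber a b hab)
  refine ⟨continuous_quot_lift hf hcont, fun V hV => ?_, hinj, fun y => ?_⟩
  · refine isOpen_iff_forall_mem_open.mpr ?_
    rintro _ ⟨q, hq, rfl⟩
    obtain ⟨U, hU, hqU, sec, hsec, hfsec⟩ := hsection (Quot.lift f hf q)
    refine ⟨Subtype.val '' (sec ⁻¹' (Quot.mk r ⁻¹' V)), ?_,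
      hU.isOpenMap_subtype_val _ ((hV.preimage continuous_quot_mk).preimage hsec),
      ⟨⟨_, hqU⟩, ?_, rfl⟩⟩
    · rintro _ ⟨u, hu, rfl⟩
      exact ⟨_, hu, hfsec u⟩
    · have hsecq : Quot.mk r (sec ⟨_, hqU⟩) = q := hinj (hfsec _)
      show Quot.mk r _ ∈ V
      rwa [hsecq]
  · obtain ⟨U, -, hy, sec, -, hfsec⟩ := hsection y
    exact ⟨Quot.mk r (sec ⟨y, hy⟩), hfsec _⟩

theorem exists_eq_mul_of_mk_eq {X : Type*} [TopologicalSpace X] [PreconnectedSpace X]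
    (Γ : Subgroup G) [DiscreteTopology Γ] {H₁ H₂ : X → G} (h₁ : Continuous H₁)
    (h₂ : Continuous H₂) (h : ∀ x, (H₁ x : G ⧸ Γ) = H₂ x) :
    ∃ γ ∈ Γ, ∀ x, H₂ x = H₁ x * γ := by
  let d : X → Γ := fun x => ⟨(H₁ x)⁻¹ * H₂ x, QuotientGroup.eq.mp (h x)⟩
  have hd : IsLocallyConstant d :=
    (IsLocallyConstant.iff_continuous d).mpr ((h₁.inv.mul h₂).subtype_mk _)
  obtain _ | ⟨⟨x₀⟩⟩ := isEmpty_or_nonempty X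
  · exact ⟨1, Γ.one_mem, isEmptyElim⟩
  refine ⟨d x₀, (d x₀).2, fun x => ?_⟩
  rw [← hd.apply_eq_of_preconnectedSpace x x₀, mul_inv_cancel_left]

section

variable (Γ : Subgroup G)

def ofLift (H : C(I, G)) (hH : (H 0 : G ⧸ Γ) = H 1) : G × PathsTo G Γ :=
  (H 0, ⟨⟨(H 0)⁻¹ * H 1, QuotientGroup.eq.mp hH⟩,
    ⟨ContinuousMap.const I (H 0)⁻¹ * H, by simp, rfl⟩⟩)

theorem phiPre_ofLift_apply (H : C(I, G)) (hH : (H 0 : G ⧸ Γ) = H 1) (t : I) :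
    (PhiPre Γ (ofLift Γ H hH)).1 t = H t :=
  congrArg _ (mul_inv_cancel_left (H 0) (H t))

theorem continuous_ofLift [DiscreteTopology Γ] {A : Type*} [TopologicalSpace A]
    {F : A → C(I, G)} (hF : Continuous F) (hFΓ : ∀ a, (F a 0 : G ⧸ Γ) = F a 1) :
    Continuous fun a => ofLift Γ (F a) (hFΓ a) := by
  have hF₀ : Continuous fun a => F a 0 := (continuous_eval_const 0).comp hF
  have hF₁ : Continuous fun a => F a 1 := (continuous_eval_const 1).comp hF
  have hγ : Continuous fun a => (F a 0)⁻¹ * F a 1 := hF₀.inv.mul hF₁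
  have hpath : Continuous fun a => ContinuousMap.const I (F a 0)⁻¹ * F a :=
    (ContinuousMap.continuous_const'.comp hF₀.inv).mul hF
  exact hF₀.prodMk (Continuous.sigma_subtype_mk
    (P := fun (g : Γ) (f : C(I, G)) => f 0 = 1 ∧ f 1 = g) (hγ.subtype_mk _) hpath _)

theorem continuous_phiPre : Continuous (PhiPre Γ) := by
  have hpath : Continuous fun p : PathsTo G Γ => p.2.1 :=
    continuous_sigma fun _ => continuous_subtype_val
  refine (ContinuousMap.continuous_of_continuous_uncurry _ ?_).subtype_mk _
  exact continuous_quotient_mk'.comp (continuous_fst.fst.mul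
    (continuous_eval.comp ((hpath.comp continuous_fst.snd).prodMk continuous_snd)))

theorem conjRel_of_phiPre_eq [DiscreteTopology Γ] {a b : G × PathsTo G Γ}
    (h : PhiPre Γ a = PhiPre Γ b) : ConjRel Γ a b := by
  obtain ⟨m, g, f, hf0, hf1⟩ := a
  obtain ⟨m', g', f', hf0', hf1'⟩ := b
  obtain ⟨γ, hγ, hlift⟩ := exists_eq_mul_of_mk_eq Γ (H₁ := fun t => m * f t)
    (H₂ := fun t => m' * f' t) (continuous_const.mul f.continuous)
    (continuous_const.mul f'.continuous) fun t => congrArg (fun ℓ => ℓ.1 t) h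
  have hm' : m' = m * γ := by simpa [hf0, hf0'] using hlift 0
  have hf' : ∀ t, f' t = γ⁻¹ * f t * γ := fun t => by
    rw [← mul_left_cancel_iff (a := m'), hlift t, hm']
    group
  refine ⟨⟨γ, hγ⟩⁻¹, by simp [hm'], Subtype.ext ?_, fun t => by simpa using hf' t⟩
  simpa [hf1, hf1'] using hf' 1

theorem exists_local_section_phiPre [DiscreteTopology Γ]
    (ℓ₀ : {f : C(I, G ⧸ Γ) // f 0 = f 1}) :
    ∃ U : Set {f : C(I, G ⧸ Γ) // f 0 = f 1}, IsOpen U ∧ ℓ₀ ∈ U ∧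
      ∃ sec : U → G × PathsTo G Γ, Continuous sec ∧ ∀ ℓ, PhiPre Γ (sec ℓ) = ℓ := by
  have cov := (Γ.isQuotientCoveringMap (isDiscrete_iff_discreteTopology.mpr ‹_›)).isCoveringMap
  obtain ⟨x₀, hx₀⟩ := QuotientGroup.mk_surjective (ℓ₀.1 0)
  obtain ⟨V, hV, hℓ₀V, Λ, hΛ⟩ := cov.exists_continuous_local_lift hx₀
  let lift : (Subtype.val ⁻¹' V : Set {f : C(I, G ⧸ Γ) // f 0 = f 1}) → C(I, G) :=
    fun ℓ => Λ ⟨ℓ.1.1, ℓ.2⟩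
  have hlift : ∀ ℓ t, (lift ℓ t : G ⧸ Γ) = ℓ.1.1 t := fun ℓ t => hΛ _ t
  have hloop : ∀ ℓ, (lift ℓ 0 : G ⧸ Γ) = lift ℓ 1 := fun ℓ => by
    rw [hlift, hlift, ℓ.1.2]
  refine ⟨_, hV.preimage continuous_subtype_val, hℓ₀V, fun ℓ => ofLift Γ (lift ℓ) (hloop ℓ),
    continuous_ofLift Γ (Λ.continuous.comp ?_) hloop, fun ℓ => ?_⟩
  · exact (continuous_subtype_val.comp continuous_subtype_val).subtype_mk _
  · exact Subtype.ext <| ContinuousMap.ext fun t =>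
      (phiPre_ofLift_apply Γ _ _ t).trans (hlift ℓ t)

end

theorem free_loop_space_of_quotient_homeomorph_general
    (Γ : Subgroup G) [DiscreteTopology Γ] :
    IsHomeomorph (Quot.lift (PhiPre Γ) (phiPre_resp Γ) :
      Quot (ConjRel Γ) → {f : C(unitInterval, G ⧸ Γ) // f 0 = f 1}) :=
  isHomeomorph_quotLift_of_exists_local_section (phiPre_resp Γ) (continuous_phiPre Γ)
    (fun _ _ => conjRel_of_phiPre_eq Γ) (exists_local_section_phiPre Γ)

/-- For a simply-connected topological group `G` and a discrete subgroup `Γ`, the map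
`Φ : G ×_Γ (∐_{g ∈ Γ} P_g(G)) → Λ(G/Γ)`, `Φ(m, f)(t) = [m ⬝ f(t)]`, is a
homeomorphism onto the free loop space of `G ⧸ Γ`. -/
theorem free_loop_space_of_quotient_homeomorph
    (Γ : Subgroup G) [SimplyConnectedSpace G] [DiscreteTopology Γ] :
    IsHomeomorph (Quot.lift (PhiPre Γ) (phiPre_resp Γ) :
      Quot (ConjRel Γ) → {f : C(unitInterval, G ⧸ Γ) // f 0 = f 1}) :=
  free_loop_space_of_quotient_homeomorph_general Γ
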